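/- Theorem 5 (full separability criterion): Let ρ = Σᵢ pᵢ ρ₁ⁱ ⊗ ⋯ ⊗ ρ_nⁱ be a fully separable n-partite state (pᵢ ≥ 0, Σᵢpᵢ = 1, each ρ_jⁱ a pure state). Then for any 1 ≤ q ≤ n−1, nonnegative reals α_q,…,α_n, and natural number l: ‖MR^{l,q}_{α_q,…,α_n}(ρ)‖_tr ≤ Π_{k=q}^n √(lα_k²+1), where MR^{l,q}(ρ) = Σᵢ pᵢ ρ₁ⁱ ⊗ ⋯ ⊗ ρ_{q−1}ⁱ ⊗ M^l_{α_q,…,α_n}[ρ_qⁱ,…,ρ_nⁱ]. -/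

import Mathlib

open Matrix
open scoped ComplexOrder

/-- Column-stacking vectorization: `vec A (j, i) = A i j`. -/
def vec {m n : Type*} (A : Matrix m n ℂ) : n × m → ℂ := fun p => A p.2 p.1

/-- The trace norm `‖A‖_tr = tr √(Aᴴ A)`, i.e. the sum of singular values. -/
noncomputable def traceNorm {m n : Type*} [Fintype m] [Fintype n] [DecidableEq n]
    (A : Matrix m n ℂ) : ℝ :=
  (((Matrix.posSemidef_conjTranspose_mul_self A).1.eigenvectorUnitary : Matrix n n ℂ) *
    diagonal (((↑) : ℝ → ℂ) ∘ (Real.sqrt ·) ∘ (Matrix.posSemidef_conjTranspose_mul_self A).1.eigenvalues) *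
    (star ((Matrix.posSemidef_conjTranspose_mul_self A).1.eigenvectorUnitary : Matrix n n ℂ))).trace.re

/-- The column vector `(α E_{l×1} ; vec Y)`, as a function on
`Fin l ⊕ (indices of vec Y)`. -/
noncomputable def augVec {m : ℕ} (l : ℕ) (α : ℝ) (Y : Matrix (Fin m) (Fin m) ℂ) :
    Fin l ⊕ (Fin m × Fin m) → ℂ :=
  Sum.elim (fun _ => ((α : ℝ) : ℂ)) (fun ab => _root_.vec Y ab)

/-- The matrix `MR^{l,q}_{α_q,…,α_n}(ρ) = ∑ᵢ pᵢ ρ₁ⁱ ⊗ ⋯ ⊗ ρ_{q−1}ⁱ ⊗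
M^l_{α_q,…,α_n}[ρ_qⁱ, …, ρ_nⁱ]`, where
`M^l[Y_q,…,Y_n] = (α_q E_{l×1}; vec Y_q) ⊗ ⨂_{k>q} (α_k E_{1×l}, vec(Y_k)ᵀ)`. -/
noncomputable def MRmat (n l : ℕ) (dims : Fin n → ℕ) (q : Fin n)
    (α : Fin n → ℝ) {N : ℕ} (p : Fin N → ℝ)
    (σ : (i : Fin N) → (j : Fin n) → Matrix (Fin (dims j)) (Fin (dims j)) ℂ) :
    Matrix
      (((j : {j : Fin n // j < q}) → Fin (dims j.1)) ×
        (Fin l ⊕ (Fin (dims q) × Fin (dims q))))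
      (((j : {j : Fin n // j < q}) → Fin (dims j.1)) ×
        ((k : {k : Fin n // q < k}) → (Fin l ⊕ (Fin (dims k.1) × Fin (dims k.1)))))
      ℂ :=
  Matrix.of fun r c =>
    ∑ i, (p i : ℂ) * (∏ j : {j : Fin n // j < q}, σ i j.1 (r.1 j) (c.1 j)) *
      augVec l (α q) (σ i q) r.2 *
      ∏ k : {k : Fin n // q < k}, augVec l (α k.1) (σ i k.1) (c.2 k)

/-!
For the `i`-th product state write `ρⱼⁱ = Bᵢⱼᴴ Bᵢⱼ` and `aₖ = (αₖ E_{l×1}; vec ρₖⁱ)`. The `i`-th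
summand of `MR` then factors as `Fᵢ Gᵢ` with `Fᵢ = (⨂_{j<q} Bᵢⱼᴴ) ⊗ a_q` and
`Gᵢ = (⨂_{j<q} Bᵢⱼ) ⊗ (⨂_{k>q} aₖ)ᵀ`. Placing the `√pᵢ Fᵢ` side by side and the `√pᵢ Gᵢ` on top
of each other writes `MR = U V`, and `‖U V‖_tr ≤ ‖U‖_F ‖V‖_F`: if `w` are the right singular
vectors of `U V`, the columns `U V wᵢ` are orthogonal, `‖U V‖_tr = ∑ᵢ ‖U V wᵢ‖`, and Cauchy–Schwarz
together with Bessel's inequality bounds this sum. Finally `‖Bᵢⱼ‖_F² = tr ρⱼⁱ = 1` and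
`‖aₖ‖² = l αₖ² + tr (ρₖⁱ)² = l αₖ² + 1`.
-/

open scoped MatrixOrder Kronecker InnerProductSpace
open WithLp

attribute [local instance] Matrix.frobeniusNormedAddCommGroup Matrix.frobeniusNormedSpace

section Frobenius

variable {m n : Type*} [Fintype m] [Fintype n]

lemma Matrix.frobenius_norm_sq {α : Type*} [NormedAddCommGroup α] (A : Matrix m n α) :
    ‖A‖ ^ 2 = ∑ i, ∑ j, ‖A i j‖ ^ 2 := by
  change ‖toLp 2 fun i => toLp 2 fun j => A i j‖ ^ 2 = _
  simp [PiLp.norm_sq_eq_of_L2]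

variable {𝕜 : Type*} [RCLike 𝕜]

lemma Matrix.frobenius_norm_sq_eq_re_trace (A : Matrix m n 𝕜) :
    ‖A‖ ^ 2 = RCLike.re (Aᴴ * A).trace := by
  simp only [frobenius_norm_sq, trace, diag, mul_apply, conjTranspose_apply, map_sum]
  rw [Finset.sum_comm]
  refine Finset.sum_congr rfl fun j _ => Finset.sum_congr rfl fun i _ => ?_
  rw [RCLike.star_def, RCLike.conj_mul, ← RCLike.ofReal_pow, RCLike.ofReal_re]

lemma Matrix.frobenius_norm_mul_unitary [DecidableEq n] (A : Matrix m n 𝕜) {W : Matrix n n 𝕜}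
    (hW : W ∈ unitaryGroup n 𝕜) : ‖A * W‖ = ‖A‖ := by
  have hWW : W * Wᴴ = 1 := mem_unitaryGroup_iff.mp hW
  have h : ((A * W)ᴴ * (A * W)).trace = (Aᴴ * A).trace := by
    rw [conjTranspose_mul, show Wᴴ * Aᴴ * (A * W) = Wᴴ * (Aᴴ * A * W) by
      simp only [Matrix.mul_assoc], trace_mul_comm, Matrix.mul_assoc, hWW, Matrix.mul_one]
  rw [← sq_eq_sq₀ (norm_nonneg _) (norm_nonneg _), frobenius_norm_sq_eq_re_trace,
    frobenius_norm_sq_eq_re_trace, h]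

lemma Matrix.frobenius_norm_kronecker {m' n' : Type*} [Fintype m'] [Fintype n']
    (A : Matrix m n 𝕜) (B : Matrix m' n' 𝕜) : ‖A ⊗ₖ B‖ = ‖A‖ * ‖B‖ := by
  rw [← sq_eq_sq₀ (norm_nonneg _) (by positivity), mul_pow, frobenius_norm_sq,
    frobenius_norm_sq, frobenius_norm_sq, Finset.sum_mul_sum]
  simp only [Fintype.sum_prod_type, kronecker_apply, norm_mul, mul_pow, Finset.sum_mul_sum]

end Frobenius

section PiKronecker

variable {J : Type*} [Fintype J] [DecidableEq J] {D E F : J → Type*}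

def Matrix.piKronecker {R : Type*} [CommMonoid R] (M : ∀ j, Matrix (D j) (E j) R) :
    Matrix (∀ j, D j) (∀ j, E j) R :=
  of fun r c => ∏ j, M j (r j) (c j)

lemma Matrix.piKronecker_mul {R : Type*} [CommSemiring R] [∀ j, Fintype (E j)]
    (M : ∀ j, Matrix (D j) (E j) R) (N : ∀ j, Matrix (E j) (F j) R) :
    piKronecker M * piKronecker N = piKronecker fun j => M j * N j := by
  ext r c
  simp only [piKronecker, mul_apply, of_apply, Finset.prod_mul_distrib.symm, Fintype.prod_sum]

variable {𝕜 : Type*} [RCLike 𝕜]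

lemma Matrix.frobenius_norm_piKronecker [∀ j, Fintype (D j)] [∀ j, Fintype (E j)]
    (M : ∀ j, Matrix (D j) (E j) 𝕜) : ‖piKronecker M‖ = ∏ j, ‖M j‖ := by
  rw [← sq_eq_sq₀ (norm_nonneg _) (by positivity), ← Finset.prod_pow, frobenius_norm_sq]
  simp only [frobenius_norm_sq, piKronecker, of_apply, norm_prod, ← Finset.prod_pow,
    Fintype.prod_sum]

lemma EuclideanSpace.norm_toLp_prod [∀ j, Fintype (E j)] (v : ∀ j, E j → 𝕜) :
    ‖(toLp 2 (fun c : ∀ j, E j => ∏ j, v j (c j)) : EuclideanSpace 𝕜 _)‖ =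
      ∏ j, ‖(toLp 2 (v j) : EuclideanSpace 𝕜 _)‖ := by
  rw [← sq_eq_sq₀ (norm_nonneg _) (by positivity), ← Finset.prod_pow]
  simp only [EuclideanSpace.norm_sq_eq, norm_prod, ← Finset.prod_pow, Fintype.prod_sum]

end PiKronecker

lemma orthonormal_normalize {𝕜 E ι : Type*} [RCLike 𝕜] [NormedAddCommGroup E]
    [InnerProductSpace 𝕜 E] {b : ι → E} (hb : Pairwise fun i j => ⟪b i, b j⟫_𝕜 = 0) :
    Orthonormal 𝕜 fun i : {i // b i ≠ 0} => ((‖b i‖⁻¹ : ℝ) : 𝕜) • b i := by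
  classical
  rw [orthonormal_iff_ite]
  rintro ⟨i, hi⟩ ⟨j, hj⟩
  simp only [inner_smul_left, inner_smul_right, RCLike.conj_ofReal, Subtype.mk.injEq]
  split_ifs with hij
  · subst hij
    rw [inner_self_eq_norm_sq_to_K]
    have : (‖b i‖ : 𝕜) ≠ 0 := by exact_mod_cast norm_ne_zero_iff.mpr hi
    push_cast
    field_simp
  · rw [hb hij, mul_zero, mul_zero]

lemma sum_norm_inner_normalize_sq_le {𝕜 E ι : Type*} [RCLike 𝕜] [NormedAddCommGroup E]
    [InnerProductSpace 𝕜 E] [Fintype ι] {b : ι → E}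
    (hb : Pairwise fun i j => ⟪b i, b j⟫_𝕜 = 0) (v : E) :
    ∑ i, ‖⟪((‖b i‖⁻¹ : ℝ) : 𝕜) • b i, v⟫_𝕜‖ ^ 2 ≤ ‖v‖ ^ 2 := by
  classical
  set f : ι → ℝ := fun i => ‖⟪((‖b i‖⁻¹ : ℝ) : 𝕜) • b i, v⟫_𝕜‖ ^ 2
  have hf : ∑ i, f i = ∑ i : {i // b i ≠ 0}, f i := by
    rw [← Finset.sum_subtype (Finset.univ.filter fun i => b i ≠ 0) (by simp),
      Finset.sum_filter_of_ne]
    intro i _ hne hbi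
    exact hne (by simp [f, hbi])
  exact hf ▸ (orthonormal_normalize hb).sum_inner_products_le v

section TraceNorm

variable {m n t 𝕜 : Type*} [Fintype m] [Fintype n] [Fintype t] [RCLike 𝕜]

omit [Fintype n] in
lemma Matrix.inner_toLp_transpose (B : Matrix m n 𝕜) (i j : n) :
    ⟪(toLp 2 (Bᵀ i) : EuclideanSpace 𝕜 m), toLp 2 (Bᵀ j)⟫_𝕜 = (Bᴴ * B) i j := by
  simp [PiLp.inner_apply, mul_apply, conjTranspose_apply, mul_comm]

lemma Matrix.sum_norm_col_mul_le (U : Matrix m t 𝕜) (C : Matrix t n 𝕜)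
    (horth : Pairwise fun i j => ((U * C)ᴴ * (U * C)) i j = 0) :
    ∑ i, ‖(toLp 2 ((U * C)ᵀ i) : EuclideanSpace 𝕜 m)‖ ≤ ‖U‖ * ‖C‖ := by
  set b : n → EuclideanSpace 𝕜 m := fun i => toLp 2 ((U * C)ᵀ i)
  set u : t → EuclideanSpace 𝕜 m := fun x => toLp 2 (Uᵀ x)
  -- `e i = 0` when `b i = 0`, since `‖0‖⁻¹ = 0`.
  set e : n → EuclideanSpace 𝕜 m := fun i => ((‖b i‖⁻¹ : ℝ) : 𝕜) • b i
  have hb : ∀ i, b i = ∑ x, C x i • u x := by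
    intro i; ext r; simp [b, u, mul_apply, mul_comm]
  have hnorm : ∀ i, ‖b i‖ = ‖⟪e i, b i⟫_𝕜‖ := by
    intro i
    simp only [e, inner_smul_left, inner_self_eq_norm_sq_to_K, RCLike.conj_ofReal, norm_mul,
      norm_pow, RCLike.norm_ofReal, abs_inv, abs_norm]
    rcases eq_or_ne ‖b i‖ 0 with h | h
    · simp [h]
    · field_simp
  have hterm : ∀ i, ‖b i‖ ≤ ∑ x, ‖C x i‖ * ‖⟪e i, u x⟫_𝕜‖ := by
    intro i
    rw [hnorm, hb i, inner_sum]
    refine (norm_sum_le _ _).trans_eq ?_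
    simp only [inner_smul_right, norm_mul]
  have hbessel : ∑ i, ∑ x, ‖⟪e i, u x⟫_𝕜‖ ^ 2 ≤ ‖U‖ ^ 2 := by
    have horth' : Pairwise fun i j => ⟪b i, b j⟫_𝕜 = 0 := fun i j hij =>
      (inner_toLp_transpose _ i j).trans (horth hij)
    rw [Finset.sum_comm, frobenius_norm_sq]
    conv_rhs => rw [Finset.sum_comm]
    gcongr with x
    refine (sum_norm_inner_normalize_sq_le horth' (u x)).trans_eq ?_
    simp [u, EuclideanSpace.norm_sq_eq]
  have hC : ∑ i, ∑ x, ‖C x i‖ ^ 2 = ‖C‖ ^ 2 := by rw [frobenius_norm_sq, Finset.sum_comm]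
  calc ∑ i, ‖b i‖ ≤ ∑ i, ∑ x, ‖C x i‖ * ‖⟪e i, u x⟫_𝕜‖ := Finset.sum_le_sum fun i _ => hterm i
    _ ≤ √(∑ i, ∑ x, ‖C x i‖ ^ 2) * √(∑ i, ∑ x, ‖⟪e i, u x⟫_𝕜‖ ^ 2) := by
        simp only [← Fintype.sum_prod_type']
        exact Real.sum_mul_le_sqrt_mul_sqrt _ _ _
    _ ≤ ‖C‖ * ‖U‖ := by
        rw [hC, Real.sqrt_sq (norm_nonneg _)]
        gcongr
        exact (Real.sqrt_le_sqrt hbessel).trans_eq (Real.sqrt_sq (norm_nonneg _))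
    _ = ‖U‖ * ‖C‖ := mul_comm _ _

variable [DecidableEq n]

noncomputable def Matrix.rightSingularVectors (A : Matrix m n 𝕜) : Matrix n n 𝕜 :=
  (isHermitian_conjTranspose_mul_self A).eigenvectorUnitary

lemma Matrix.rightSingularVectors_mem_unitaryGroup (A : Matrix m n 𝕜) :
    A.rightSingularVectors ∈ unitaryGroup n 𝕜 :=
  (isHermitian_conjTranspose_mul_self A).eigenvectorUnitary.2

lemma Matrix.conjTranspose_mul_self_mul_rightSingularVectors (A : Matrix m n 𝕜) :
    (A * A.rightSingularVectors)ᴴ * (A * A.rightSingularVectors) =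
      diagonal (RCLike.ofReal ∘ (isHermitian_conjTranspose_mul_self A).eigenvalues) := by
  rw [← (isHermitian_conjTranspose_mul_self A).conjStarAlgAut_star_eigenvectorUnitary,
    Unitary.conjStarAlgAut_star_apply, conjTranspose_mul, rightSingularVectors,
    ← star_eq_conjTranspose]
  simp only [Matrix.mul_assoc]

end TraceNorm

section TraceNorm

variable {m n t : Type*} [Fintype m] [Fintype n] [Fintype t] [DecidableEq n]

lemma traceNorm_eq_sum_norm_col (A : Matrix m n ℂ) :
    traceNorm A = ∑ i, ‖(toLp 2 ((A * A.rightSingularVectors)ᵀ i) : EuclideanSpace ℂ m)‖ := by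
  have hnorm : ∀ i, ‖(toLp 2 ((A * A.rightSingularVectors)ᵀ i) : EuclideanSpace ℂ m)‖ =
      √((isHermitian_conjTranspose_mul_self A).eigenvalues i) := by
    intro i
    rw [← Real.sqrt_sq (norm_nonneg _), InnerProductSpace.norm_sq_eq_re_inner (𝕜 := ℂ),
      inner_toLp_transpose, conjTranspose_mul_self_mul_rightSingularVectors]
    simp
  rw [Finset.sum_congr rfl fun i _ => hnorm i, traceNorm, trace_mul_cycle,
    Unitary.coe_star_mul_self, Matrix.one_mul, trace_diagonal, Complex.re_sum]
  rfl

theorem traceNorm_mul_le (U : Matrix m t ℂ) (V : Matrix t n ℂ) :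
    traceNorm (U * V) ≤ ‖U‖ * ‖V‖ := by
  set W := (U * V).rightSingularVectors
  have horth : Pairwise fun i j => ((U * (V * W))ᴴ * (U * (V * W))) i j = 0 := by
    intro i j hij
    rw [← Matrix.mul_assoc U V W, conjTranspose_mul_self_mul_rightSingularVectors,
      diagonal_apply_ne _ hij]
  calc traceNorm (U * V) = ∑ i, ‖(toLp 2 ((U * (V * W))ᵀ i) : EuclideanSpace ℂ m)‖ := by
        rw [traceNorm_eq_sum_norm_col, Matrix.mul_assoc]
    _ ≤ ‖U‖ * ‖V * W‖ := sum_norm_col_mul_le U (V * W) horth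
    _ = ‖U‖ * ‖V‖ := by rw [frobenius_norm_mul_unitary V (rightSingularVectors_mem_unitaryGroup _)]

theorem traceNorm_sum_mul_le {ι : Type*} [Fintype ι] (F : ι → Matrix m t ℂ)
    (G : ι → Matrix t n ℂ) :
    traceNorm (∑ i, F i * G i) ≤ √(∑ i, ‖F i‖ ^ 2) * √(∑ i, ‖G i‖ ^ 2) := by
  let U : Matrix m (ι × t) ℂ := of fun r ix => F ix.1 r ix.2
  let V : Matrix (ι × t) n ℂ := of fun ix c => G ix.1 ix.2 c
  have hUV : ∑ i, F i * G i = U * V := by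
    ext r c
    simp [U, V, Matrix.sum_apply, mul_apply, Fintype.sum_prod_type]
  have hU : ‖U‖ = √(∑ i, ‖F i‖ ^ 2) := by
    rw [← Real.sqrt_sq (norm_nonneg U), frobenius_norm_sq]
    simp only [frobenius_norm_sq, U, of_apply, Fintype.sum_prod_type]
    rw [Finset.sum_comm]
  have hV : ‖V‖ = √(∑ i, ‖G i‖ ^ 2) := by
    rw [← Real.sqrt_sq (norm_nonneg V), frobenius_norm_sq]
    simp only [frobenius_norm_sq, V, of_apply, Fintype.sum_prod_type]
  rw [hUV, ← hU, ← hV]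
  exact traceNorm_mul_le U V

theorem traceNorm_sum_smul_mul_le {ι : Type*} [Fintype ι] {p : ι → ℝ} (hp : ∀ i, 0 ≤ p i)
    (F : ι → Matrix m t ℂ) (G : ι → Matrix t n ℂ) :
    traceNorm (∑ i, (p i : ℂ) • (F i * G i)) ≤
      √(∑ i, p i * ‖F i‖ ^ 2) * √(∑ i, p i * ‖G i‖ ^ 2) := by
  have hsplit : ∀ i, (p i : ℂ) • (F i * G i) = ((√(p i) : ℂ) • F i) * ((√(p i) : ℂ) • G i) := by
    intro i
    rw [Matrix.smul_mul, Matrix.mul_smul, smul_smul, ← Complex.ofReal_mul,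
      Real.mul_self_sqrt (hp i)]
  simp only [hsplit]
  refine (traceNorm_sum_mul_le _ _).trans_eq ?_
  simp only [norm_smul, Complex.norm_real, Real.norm_eq_abs, mul_pow, sq_abs,
    Real.sq_sqrt (hp _)]

end TraceNorm

lemma norm_toLp_augVec {d : ℕ} (l : ℕ) (a : ℝ) {Y : Matrix (Fin d) (Fin d) ℂ}
    (hY : Y.IsHermitian) (hpure : (Y * Y).trace = 1) :
    ‖(toLp 2 (augVec l a Y) : EuclideanSpace ℂ _)‖ = √(l * a ^ 2 + 1) := by
  have hY1 : ‖Yᵀ‖ ^ 2 = 1 := by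
    rw [frobenius_norm_transpose, frobenius_norm_sq_eq_re_trace, hY.eq, hpure, RCLike.one_re]
  rw [← hY1, EuclideanSpace.norm_eq, frobenius_norm_sq, Fintype.sum_sum_type]
  simp [augVec, _root_.vec, Fintype.sum_prod_type]

lemma MRmat_eq_sum_smul_mul (n l : ℕ) (dims : Fin n → ℕ) (q : Fin n) (α : Fin n → ℝ)
    {N : ℕ} (p : Fin N → ℝ)
    {σ B : (i : Fin N) → (j : Fin n) → Matrix (Fin (dims j)) (Fin (dims j)) ℂ}
    (hB : ∀ i j, σ i j = (B i j)ᴴ * B i j) :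
    MRmat n l dims q α p σ = ∑ i, (p i : ℂ) •
      ((piKronecker (fun j : {j : Fin n // j < q} => (B i j)ᴴ) ⊗ₖ
          replicateCol Unit (augVec l (α q) (σ i q))) *
        (piKronecker (fun j : {j : Fin n // j < q} => B i j) ⊗ₖ
          replicateRow Unit
            fun c : (k : {k : Fin n // q < k}) → Fin l ⊕ (Fin (dims k) × Fin (dims k)) =>
              ∏ k, augVec l (α k.1) (σ i k.1) (c k))) := by
  simp only [← mul_kronecker_mul, piKronecker_mul, ← hB]
  ext r c
  simp [MRmat, Matrix.sum_apply, piKronecker, mul_apply, mul_assoc]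

theorem fully_separable_MRmat_le_general (n l : ℕ) (dims : Fin n → ℕ) (q : Fin n)
    (α : Fin n → ℝ)
    {N : ℕ} (p : Fin N → ℝ)
    (σ : (i : Fin N) → (j : Fin n) → Matrix (Fin (dims j)) (Fin (dims j)) ℂ)
    (hp : ∀ i, 0 ≤ p i) (hp1 : ∑ i, p i = 1)
    (hpsd : ∀ i j, (σ i j).PosSemidef) (htr : ∀ i j, (σ i j).trace = 1)
    (hpure : ∀ i j, (σ i j * σ i j).trace = 1) :
    traceNorm (MRmat n l dims q α p σ) ≤
      ∏ k ∈ Finset.univ.filter (fun k : Fin n => q ≤ k),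
        Real.sqrt (l * α k ^ 2 + 1) := by
  have hσ : ∀ i j, ∃ B, σ i j = Bᴴ * B := fun i j =>
    CStarAlgebra.nonneg_iff_eq_star_mul_self.mp (hpsd i j).nonneg
  choose B hB using hσ
  have hBnorm : ∀ i j, ‖B i j‖ = 1 := by
    intro i j
    rw [← pow_eq_one_iff_of_nonneg (norm_nonneg _) two_ne_zero, frobenius_norm_sq_eq_re_trace,
      ← hB i j, htr i j, RCLike.one_re]
  rw [MRmat_eq_sum_smul_mul n l dims q α p hB]
  refine (traceNorm_sum_smul_mul_le hp _ _).trans_eq ?_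
  simp only [frobenius_norm_kronecker, frobenius_norm_piKronecker, frobenius_norm_conjTranspose,
    hBnorm, frobenius_norm_replicateCol, frobenius_norm_replicateRow,
    EuclideanSpace.norm_toLp_prod, norm_toLp_augVec _ _ (hpsd _ _).1 (hpure _ _),
    Finset.prod_const_one, one_mul]
  rw [← Finset.sum_mul, ← Finset.sum_mul, hp1, one_mul, one_mul,
    Real.sqrt_sq (Real.sqrt_nonneg _), Real.sqrt_sq (by positivity), Finset.filter_le_eq_Ici,
    ← Finset.mul_prod_Ioi_eq_prod_Ici,
    Finset.prod_subtype (Finset.Ioi q) (p := (q < ·)) fun k => Finset.mem_Ioi]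

/-- Theorem 5 (full separability criterion): for a fully separable `n`-partite
state `ρ = ∑ᵢ pᵢ ρ₁ⁱ ⊗ ⋯ ⊗ ρ_nⁱ`, any `1 ≤ q ≤ n−1`, nonnegative reals
`α_q, …, α_n` and natural `l`:
`‖MR^{l,q}_{α_q,…,α_n}(ρ)‖_tr ≤ ∏_{k=q}^{n} √(l α_k² + 1)`. -/
theorem fully_separable_MRmat_le (n l : ℕ) (dims : Fin n → ℕ) (q : Fin n)
    (hq : (q : ℕ) < n - 1) (α : Fin n → ℝ) (hα : ∀ k, 0 ≤ α k)
    {N : ℕ} (p : Fin N → ℝ)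
    (σ : (i : Fin N) → (j : Fin n) → Matrix (Fin (dims j)) (Fin (dims j)) ℂ)
    (hp : ∀ i, 0 ≤ p i) (hp1 : ∑ i, p i = 1)
    (hpsd : ∀ i j, (σ i j).PosSemidef) (htr : ∀ i j, (σ i j).trace = 1)
    (hpure : ∀ i j, (σ i j * σ i j).trace = 1) :
    traceNorm (MRmat n l dims q α p σ) ≤
      ∏ k ∈ Finset.univ.filter (fun k : Fin n => q ≤ k),
        Real.sqrt (l * α k ^ 2 + 1) :=
  fully_separable_MRmat_le_general n l dims q α p σ hp hp1 hpsd htr hpure
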